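/- For any n ≥ 3, μ_t(L(K_n)) ≥ n − 1 + ⌊(n−1)/2⌋. -/

import Mathlib

namespace MutualVisibility

open SimpleGraph

variable {V W : Type*}

/-- `x` and `y` are `X`-visible in `G`: there is a shortest `x,y`-path all of whose
internal vertices avoid `X`. -/
def Visible (G : SimpleGraph V) (X : Set V) (x y : V) : Prop :=
  ∃ p : G.Walk x y, p.length = G.dist x y ∧ ∀ v ∈ p.support, v ≠ x → v ≠ y → v ∉ X

/-- `X` is a mutual-visibility set: any two vertices of `X` are `X`-visible. -/
def IsMutualVisSet (G : SimpleGraph V) (X : Set V) : Prop :=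
  ∀ x ∈ X, ∀ y ∈ X, Visible G X x y

/-- outer mutual-visibility set -/
def IsOuterMutualVisSet (G : SimpleGraph V) (X : Set V) : Prop :=
  IsMutualVisSet G X ∧ ∀ x ∈ X, ∀ y ∉ X, Visible G X x y

/-- dual mutual-visibility set -/
def IsDualMutualVisSet (G : SimpleGraph V) (X : Set V) : Prop :=
  IsMutualVisSet G X ∧ ∀ x ∉ X, ∀ y ∉ X, Visible G X x y

/-- total mutual-visibility set -/
def IsTotalMutualVisSet (G : SimpleGraph V) (X : Set V) : Prop :=
  ∀ x y : V, Visible G X x y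

/-- mutual-visibility number μ(G) -/
noncomputable def mu (G : SimpleGraph V) : ℕ :=
  sSup {k | ∃ X : Set V, IsMutualVisSet G X ∧ X.ncard = k}

/-- outer mutual-visibility number μ_o(G) -/
noncomputable def muOuter (G : SimpleGraph V) : ℕ :=
  sSup {k | ∃ X : Set V, IsOuterMutualVisSet G X ∧ X.ncard = k}

/-- dual mutual-visibility number μ_d(G) -/
noncomputable def muDual (G : SimpleGraph V) : ℕ :=
  sSup {k | ∃ X : Set V, IsDualMutualVisSet G X ∧ X.ncard = k}

/-- total mutual-visibility number μ_t(G) -/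
noncomputable def muTotal (G : SimpleGraph V) : ℕ :=
  sSup {k | ∃ X : Set V, IsTotalMutualVisSet G X ∧ X.ncard = k}

/-- `H` contains a subgraph copy of `F`. -/
def ContainsCopy (F : SimpleGraph W) (H : SimpleGraph V) : Prop :=
  ∃ f : W → V, Function.Injective f ∧ ∀ a b, F.Adj a b → H.Adj (f a) (f b)

/-- The Turán number ex(n; F): max number of edges of an `n`-vertex graph with no copy of `F`. -/
noncomputable def exNum (n : ℕ) (F : SimpleGraph W) : ℕ :=
  sSup {k | ∃ H : SimpleGraph (Fin n), ¬ ContainsCopy F H ∧ H.edgeSet.ncard = k}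

/-- The direct (tensor/categorical) product of graphs. -/
def directProd (G : SimpleGraph V) (H : SimpleGraph W) : SimpleGraph (V × W) where
  Adj x y := G.Adj x.1 y.1 ∧ H.Adj x.2 y.2
  symm := ⟨fun _ _ h => ⟨h.1.symm, h.2.symm⟩⟩
  loopless := ⟨fun x h => G.loopless.irrefl x.1 h.1⟩

/-- The join `G + H` of two graphs. -/
def graphJoin (G : SimpleGraph V) (H : SimpleGraph W) : SimpleGraph (V ⊕ W) where
  Adj u v := match u, v with
    | Sum.inl a, Sum.inl b => G.Adj a b
    | Sum.inr a, Sum.inr b => H.Adj a b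
    | _, _ => True
  symm := ⟨fun u v => match u, v with
    | Sum.inl _, Sum.inl _ => fun h => G.symm.symm _ _ h
    | Sum.inr _, Sum.inr _ => fun h => H.symm.symm _ _ h
    | Sum.inl _, Sum.inr _ => fun _ => trivial
    | Sum.inr _, Sum.inl _ => fun _ => trivial⟩
  loopless := ⟨fun u => match u with
    | Sum.inl a => G.loopless.irrefl a
    | Sum.inr a => H.loopless.irrefl a⟩

/-- A big-μ graph: `G = (K_1 ∪ K_t) + H` for some `t ≥ 0` and some graph `H`. -/
def IsBigMu {V : Type} (G : SimpleGraph V) : Prop :=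
  ∃ (t : ℕ) (W : Type) (H : SimpleGraph W),
    Nonempty (G ≃g graphJoin ((⊤ : SimpleGraph (Fin 1)) ⊕g (⊤ : SimpleGraph (Fin t))) H)

/-- A cograph: a graph with no induced path on four vertices. -/
def IsCograph (G : SimpleGraph V) : Prop :=
  ¬ ∃ f : Fin 4 → V, Function.Injective f ∧
      ∀ a b, (pathGraph 4).Adj a b ↔ G.Adj (f a) (f b)

/-- The Petersen graph, realized as the Kneser graph K(5,2). -/
def petersen : SimpleGraph {s : Finset (Fin 5) // s.card = 2} where
  Adj a b := Disjoint a.1 b.1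
  symm := ⟨fun _ _ h => h.symm⟩
  loopless := by
    constructor
    rintro ⟨s, hs⟩ h
    rw [disjoint_self, Finset.bot_eq_empty] at h
    subst h
    simp at hs

/-! Fix a vertex `w` and a matching `M` of `K_V`. The edges through `w` together with `M` form a
total mutual-visibility set of `L(K_V)`: two distinct non-adjacent vertices of `L(K_V)` are disjoint
edges `e`, `f`, one of which, say `f = {c, d}`, misses `w`. For an endpoint `u ≠ w` of `e`, the
edges `{u, c}` and `{u, d}` are common neighbours of `e` and `f` avoiding `w`, and they cannot
both lie in the matching `M`; the one outside `M` is the middle vertex of a shortest `e,f`-path.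
Taking for `M` a matching of `K_V - w` with `⌊(|V| - 1)/2⌋` edges gives the bound. -/

section Visibility

variable {G : SimpleGraph V} {X : Set V} {x y z : V}

lemma visible_self (G : SimpleGraph V) (X : Set V) (x : V) : Visible G X x x :=
  ⟨.nil, by simp, fun _ hv hvx _ => absurd (List.mem_singleton.mp hv) hvx⟩

lemma visible_of_adj (h : G.Adj x y) : Visible G X x y := by
  refine ⟨.cons h .nil, by simp [dist_eq_one_iff_adj.mpr h], fun v hv hvx hvy => ?_⟩
  simp only [Walk.support_cons, Walk.support_nil, List.mem_cons,
    List.not_mem_nil, or_false] at hv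
  rcases hv with rfl | rfl <;> contradiction

lemma visible_of_adj_of_adj (hxy : x ≠ y) (hnadj : ¬ G.Adj x y) (hxz : G.Adj x z)
    (hzy : G.Adj z y) (hz : z ∉ X) : Visible G X x y := by
  let p : G.Walk x y := .cons hxz (.cons hzy .nil)
  have hdist : G.dist x y = 2 := by
    have h := edist_eq_two_iff.mpr ⟨hxy, hnadj, ⟨z, hxz, hzy.symm⟩⟩
    rw [← p.reachable.coe_dist_eq_edist] at h
    exact_mod_cast h
  refine ⟨p, by simp [p, hdist], fun v hv hvx hvy => ?_⟩
  simp only [p, Walk.support_cons, Walk.support_nil, List.mem_cons,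
    List.not_mem_nil, or_false] at hv
  rcases hv with rfl | rfl | rfl <;> first | contradiction | exact hz

lemma isTotalMutualVisSet_of_exists_common_neighbor_notMem
    (h : ∀ x y, x ≠ y → ¬ G.Adj x y → ∃ z ∉ X, G.Adj x z ∧ G.Adj z y) :
    IsTotalMutualVisSet G X := by
  intro x y
  by_cases hxy : x = y
  · exact hxy ▸ visible_self G X x
  by_cases hadj : G.Adj x y
  · exact visible_of_adj hadj
  obtain ⟨z, hz, hxz, hzy⟩ := h x y hxy hadj
  exact visible_of_adj_of_adj hxy hadj hxz hzy hz

lemma ncard_le_muTotal [Finite V] (hX : IsTotalMutualVisSet G X) : X.ncard ≤ muTotal G :=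
  le_csSup ⟨Nat.card V, by rintro _ ⟨Y, -, rfl⟩; exact Set.ncard_le_card Y⟩ ⟨X, hX, rfl⟩

end Visibility

end MutualVisibility

namespace SimpleGraph

variable {V : Type*} {G : SimpleGraph V}

theorem Subgraph.IsMatching.ncard_verts [Finite V] {M : G.Subgraph} (hM : M.IsMatching) :
    M.verts.ncard = 2 * M.edgeSet.ncard := by
  classical
  have := Fintype.ofFinite V
  rw [isMatching_iff_forall_degree] at hM
  calc M.verts.ncard = ∑ _v : M.verts, 1 := by
        simp [← Nat.card_coe_set_eq, Nat.card_eq_fintype_card]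
    _ = ∑ v : M.verts, M.coe.degree v :=
        Finset.sum_congr rfl fun v _ => by rw [Subgraph.coe_degree]; convert (hM v v.2).symm
    _ = 2 * M.coe.edgeFinset.card := by convert M.coe.sum_degrees_eq_twice_card_edges
    _ = 2 * M.edgeSet.ncard := by
        rw [← Subgraph.image_coe_edgeSet_coe, Set.ncard_image_of_injective _
          (Sym2.map.injective Subtype.val_injective), Set.ncard_eq_toFinset_card']
        rfl

end SimpleGraph

namespace MutualVisibility

open SimpleGraph

variable {V : Type*}

def starUnionMatching (w : V) (M : (⊤ : SimpleGraph V).Subgraph) :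
    Set (⊤ : SimpleGraph V).edgeSet :=
  Subtype.val ⁻¹' ((⊤ : SimpleGraph V).incidenceSet w ∪ M.edgeSet)

lemma exists_common_neighbor_notMem_starUnionMatching {w : V}
    {M : (⊤ : SimpleGraph V).Subgraph} (hM : M.IsMatching) {e f : (⊤ : SimpleGraph V).edgeSet}
    (hef : ∀ v ∈ (e : Sym2 V), v ∉ (f : Sym2 V)) (hw : w ∉ (f : Sym2 V)) :
    ∃ g ∉ starUnionMatching w M,
      (⊤ : SimpleGraph V).lineGraph.Adj e g ∧ (⊤ : SimpleGraph V).lineGraph.Adj g f := by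
  obtain ⟨⟨⟨a, b⟩⟩, hab⟩ := e
  obtain ⟨⟨⟨c, d⟩⟩, hcd⟩ := f
  obtain ⟨u, hue, huw⟩ : ∃ u ∈ s(a, b), u ≠ w := by
    by_cases haw : a = w
    · exact ⟨b, Sym2.mem_mk_right a b, haw ▸ (Ne.symm hab)⟩
    · exact ⟨a, Sym2.mem_mk_left a b, haw⟩
  obtain ⟨x, hxf, hux⟩ : ∃ x ∈ s(c, d), ¬ M.Adj u x := by
    by_contra! h
    exact hcd (hM.eq_of_adj_left (h c (Sym2.mem_mk_left c d)) (h d (Sym2.mem_mk_right c d)))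
  have hux' : u ≠ x := fun h => hef u hue (h ▸ hxf)
  refine ⟨⟨s(u, x), hux'⟩, ?_, ?_, ?_⟩
  · have hwx : w ≠ x := fun h => hw (h ▸ hxf)
    simp [starUnionMatching, incidenceSet, huw.symm, hwx, hux]
  · exact lineGraph_adj_iff_exists.mpr
      ⟨fun h => hef x (congrArg Subtype.val h ▸ Sym2.mem_mk_right u x) hxf,
        u, hue, Sym2.mem_mk_left u x⟩
  · exact lineGraph_adj_iff_exists.mpr
      ⟨fun h => hef u hue (congrArg Subtype.val h ▸ Sym2.mem_mk_left u x),
        x, Sym2.mem_mk_right u x, hxf⟩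

lemma isTotalMutualVisSet_starUnionMatching (w : V) {M : (⊤ : SimpleGraph V).Subgraph}
    (hM : M.IsMatching) :
    IsTotalMutualVisSet (⊤ : SimpleGraph V).lineGraph (starUnionMatching w M) := by
  refine isTotalMutualVisSet_of_exists_common_neighbor_notMem fun e f hne hnadj => ?_
  have hef : ∀ v ∈ (e : Sym2 V), v ∉ (f : Sym2 V) := fun v hve hvf =>
    hnadj (lineGraph_adj_iff_exists.mpr ⟨hne, v, hve, hvf⟩)
  by_cases hwf : w ∈ (f : Sym2 V)
  · obtain ⟨g, hg, hfg, hge⟩ := exists_common_neighbor_notMem_starUnionMatching hM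
      (fun v hvf hve => hef v hve hvf) (fun hwe => hef w hwe hwf)
    exact ⟨g, hg, hge.symm, hfg.symm⟩
  · exact exists_common_neighbor_notMem_starUnionMatching hM hef hwf

lemma ncard_starUnionMatching [Fintype V] {w : V} {M : (⊤ : SimpleGraph V).Subgraph}
    (hw : w ∉ M.verts) :
    (starUnionMatching w M).ncard = Fintype.card V - 1 + M.edgeSet.ncard := by
  classical
  have hdisj : Disjoint ((⊤ : SimpleGraph V).incidenceSet w) M.edgeSet :=
    Set.disjoint_left.mpr fun e he heM => hw (Subgraph.mem_verts_of_mem_edge heM he.2)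
  have hrange : (⊤ : SimpleGraph V).incidenceSet w ∪ M.edgeSet ⊆
      Set.range ((↑) : (⊤ : SimpleGraph V).edgeSet → Sym2 V) := by
    rw [Subtype.range_coe]
    exact Set.union_subset (incidenceSet_subset _ w) M.edgeSet_subset
  rw [starUnionMatching, Set.ncard_preimage_of_injective_subset_range Subtype.val_injective hrange,
    Set.ncard_union_eq hdisj, Set.ncard_eq_toFinset_card', Set.toFinset_card,
    card_incidenceSet_eq_degree, complete_graph_degree]

lemma exists_isMatching_top_ncard_edgeSet [Fintype V] (w : V) :
    ∃ M : (⊤ : SimpleGraph V).Subgraph,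
      M.IsMatching ∧ w ∉ M.verts ∧ M.edgeSet.ncard = (Fintype.card V - 1) / 2 := by
  classical
  obtain ⟨u, huw, hu⟩ := Finset.exists_subset_card_eq
    (show 2 * ((Fintype.card V - 1) / 2) ≤ (Finset.univ.erase w).card by
      rw [Finset.card_erase_of_mem (Finset.mem_univ w), Finset.card_univ]; omega)
  obtain ⟨M, hMu, hM⟩ :=
    ((IsClique.top (u : Set V)).even_iff_exists_isMatching u.finite_toSet).mp
      (by rw [Set.ncard_coe_finset, hu]; exact even_two_mul _)
  refine ⟨M, hM, fun hwM => ?_, ?_⟩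
  · rw [hMu] at hwM
    exact Finset.notMem_erase w _ (huw hwM)
  · have hcard := hM.ncard_verts
    rw [hMu, Set.ncard_coe_finset, hu] at hcard
    omega

theorem le_muTotal_lineGraph_top [Fintype V] [Nonempty V] :
    Fintype.card V - 1 + (Fintype.card V - 1) / 2 ≤ muTotal (⊤ : SimpleGraph V).lineGraph := by
  obtain ⟨w⟩ := ‹Nonempty V›
  obtain ⟨M, hM, hwM, hMcard⟩ := exists_isMatching_top_ncard_edgeSet w
  calc Fintype.card V - 1 + (Fintype.card V - 1) / 2 = (starUnionMatching w M).ncard := by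
        rw [ncard_starUnionMatching hwM, hMcard]
    _ ≤ muTotal (⊤ : SimpleGraph V).lineGraph :=
        ncard_le_muTotal (isTotalMutualVisSet_starUnionMatching w hM)

theorem muTotal_lineGraph_complete_lower_bound (n : ℕ) (hn : 3 ≤ n) :
    n - 1 + (n - 1) / 2 ≤ muTotal (⊤ : SimpleGraph (Fin n)).lineGraph := by
  have : Nonempty (Fin n) := ⟨⟨0, by omega⟩⟩
  simpa using le_muTotal_lineGraph_top (V := Fin n)
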